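/- Let J ⊆ {1,…,l} and P = {x ∈ ℝ^l : ⟨w(e_i), x⟩_B ≥ 0 for all w ∈ W_J and all i ∉ J}. For every w ∈ W, if the topological interior of the chamber D_w := w(D) meets the complement of P, then the interior of D_w is entirely contained in the complement of P. -/

import Mathlib

open Matrix Finset

/-- The Gram matrix `B` with `B i i = 1` and `B i k = -(b i k)/2` for `i ≠ k`. -/
noncomputable def gramB (l : ℕ) (b : Fin l → Fin l → ℝ) : Matrix (Fin l) (Fin l) ℝ :=
  fun i k => if i = k then 1 else -(b i k) / 2

/-- The bilinear form `⟨v, w⟩_B = vᵀ B w`. -/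
noncomputable def bform (l : ℕ) (b : Fin l → Fin l → ℝ) (v w : Fin l → ℝ) : ℝ :=
  dotProduct v ((gramB l b).mulVec w)

/-- The matrix `M j` of the reflection `σ j (w) = w - 2⟨w, e j⟩_B e j`: it agrees with
the identity except in row `j`, where `(M j) j j = -1` and `(M j) j k = b j k` for `k ≠ j`. -/
noncomputable def reflM (l : ℕ) (b : Fin l → Fin l → ℝ) (j : Fin l) :
    Matrix (Fin l) (Fin l) ℝ :=
  fun r c => if r = j then (if c = j then -1 else b j c) else (if r = c then 1 else 0)

/-- The subgroup `W_J` generated by the reflections `σ j`, `j ∈ J` (since each `σ j` is an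
involution, it coincides with the submonoid generated by them). -/
noncomputable def WJ (l : ℕ) (b : Fin l → Fin l → ℝ) (J : Set (Fin l)) :
    Submonoid (Matrix (Fin l) (Fin l) ℝ) :=
  Submonoid.closure (reflM l b '' J)

/-- The fundamental chamber `D = {x : ⟨x, e i⟩_B ≥ 0 for all i}`. -/
noncomputable def chamberD (l : ℕ) (b : Fin l → Fin l → ℝ) : Set (Fin l → ℝ) :=
  {x | ∀ i : Fin l, 0 ≤ bform l b x (Pi.single i 1)}

/-- The cone `T_J = ⋃_{w ∈ W_J} w(D)`. -/
noncomputable def TJ (l : ℕ) (b : Fin l → Fin l → ℝ) (J : Set (Fin l)) : Set (Fin l → ℝ) :=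
  {y | ∃ w ∈ WJ l b J, ∃ x ∈ chamberD l b, y = w.mulVec x}

/-!
Each `σ_j` preserves `⟨·,·⟩_B`, so for `x = w y` and `u ∈ W_J` we get
`⟨u e_i, x⟩_B = ⟨α, y⟩_B` with `α = w⁻¹ u e_i`. Because all `b_ij ≥ 2`, such a root `α` is
sign-coherent: writing `w⁻¹ u` as a word with no two equal adjacent letters, induction on the
word shows that the coordinates of `α` are all `≥ 0`, with the largest one at the first letter,
or all `≤ 0`. As `⟨α, y⟩_B = ∑ α_k ⟨y, e_k⟩_B` and every `⟨y, e_k⟩_B` is positive on the interior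
of `D`, the sign of `⟨α, y⟩_B` is the same at all interior points `y` of `D`.
-/

theorem exists_isChain_ne_prod_map_eq {α M : Type*} [Monoid M] (f : α → M)
    (hf : ∀ a, f a * f a = 1) (s : List α) :
    ∃ t : List α, t.IsChain (· ≠ ·) ∧ (t.map f).prod = (s.map f).prod := by
  induction s with
  | nil => exact ⟨[], List.isChain_nil, rfl⟩
  | cons a s ih =>
    obtain ⟨_ | ⟨a', t'⟩, ht, hprod⟩ := ih
    · exact ⟨[a], List.isChain_singleton a, by simp [← hprod]⟩
    by_cases h : a = a'
    · subst h
      refine ⟨t', ht.tail, ?_⟩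
      rw [List.map_cons, List.prod_cons, ← hprod, List.map_cons, List.prod_cons, ← mul_assoc,
        hf, one_mul]
    · exact ⟨a :: a' :: t', List.isChain_cons_cons.2 ⟨h, ht⟩, by simp [← hprod]⟩

theorem interior_image_subset_image_interior {X Y : Type*} [TopologicalSpace X]
    [TopologicalSpace Y] {f : X → Y} (hf : Continuous f) (hinj : Function.Injective f)
    (s : Set X) : interior (f '' s) ⊆ f '' interior s := by
  intro x hx
  obtain ⟨y, -, rfl⟩ := interior_subset hx
  refine ⟨y, ?_, rfl⟩
  simpa [hinj.preimage_image] using preimage_interior_subset_interior_preimage hf hx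

section

variable {l : ℕ} {b : Fin l → Fin l → ℝ}

lemma bform_single_left (j : Fin l) (x : Fin l → ℝ) :
    bform l b (Pi.single j 1) x = (gramB l b *ᵥ x) j := by
  simp [bform, single_dotProduct]

lemma bform_single_single (j : Fin l) : bform l b (Pi.single j 1) (Pi.single j 1) = 1 := by
  simp [bform_single_left, mulVec_single, gramB]

lemma bform_sub_left (x y z : Fin l → ℝ) :
    bform l b (x - y) z = bform l b x z - bform l b y z := sub_dotProduct _ _ _

lemma bform_sub_right (x y z : Fin l → ℝ) :
    bform l b x (y - z) = bform l b x y - bform l b x z := by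
  simp [bform, mulVec_sub, dotProduct_sub]

lemma bform_smul_left (c : ℝ) (x y : Fin l → ℝ) :
    bform l b (c • x) y = c * bform l b x y := smul_dotProduct _ _ _

lemma bform_smul_right (c : ℝ) (x y : Fin l → ℝ) :
    bform l b x (c • y) = c * bform l b x y := by
  simp [bform, mulVec_smul, dotProduct_smul]

lemma gramB_transpose (hsym : ∀ i j, i ≠ j → b i j = b j i) : (gramB l b)ᵀ = gramB l b := by
  ext r c
  by_cases h : r = c
  · simp [gramB, h]
  · simp [gramB, h, Ne.symm h, hsym c r (Ne.symm h)]

lemma bform_comm (hsym : ∀ i j, i ≠ j → b i j = b j i) (x y : Fin l → ℝ) :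
    bform l b x y = bform l b y x := by
  rw [bform, bform, dotProduct_mulVec, ← mulVec_transpose, gramB_transpose hsym, dotProduct_comm]

lemma bform_eq_sum (hsym : ∀ i j, i ≠ j → b i j = b j i) (x y : Fin l → ℝ) :
    bform l b x y = ∑ k, x k * bform l b y (Pi.single k 1) := by
  simp only [bform_comm hsym y, bform_single_left]; rfl

lemma reflM_apply (j r c : Fin l) :
    reflM l b j r c = (1 : Matrix (Fin l) (Fin l) ℝ) r c
      - 2 * (Pi.single j 1 : Fin l → ℝ) r * gramB l b j c := by
  by_cases hr : r = j
  · subst hr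
    by_cases hc : c = r
    · subst hc; simp [reflM, gramB]; norm_num
    · simp [reflM, gramB, one_apply, hc, Ne.symm hc]; ring
  · simp [reflM, one_apply, hr]

lemma reflM_mulVec (j : Fin l) (x : Fin l → ℝ) :
    reflM l b j *ᵥ x = x - (2 * bform l b (Pi.single j 1) x) • Pi.single j 1 := by
  ext r
  simp only [mulVec, dotProduct, reflM_apply, sub_mul, Finset.sum_sub_distrib, one_apply,
    ite_mul, one_mul, zero_mul, Finset.sum_ite_eq, Finset.mem_univ, if_true, mul_assoc,
    ← Finset.mul_sum, bform_single_left]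
  simp [Pi.single_apply, mul_comm]

lemma reflM_mulVec_apply_of_ne {j k : Fin l} (hk : k ≠ j) (x : Fin l → ℝ) :
    (reflM l b j *ᵥ x) k = x k := by
  simp [reflM_mulVec, Pi.single_eq_of_ne hk]

lemma reflM_mulVec_apply_self (j : Fin l) (x : Fin l → ℝ) :
    (reflM l b j *ᵥ x) j = -x j + ∑ s ∈ univ.erase j, b j s * x s := by
  rw [mulVec, dotProduct, ← Finset.add_sum_erase _ _ (mem_univ j)]
  congr 1
  · simp [reflM]
  · exact Finset.sum_congr rfl fun s hs => by simp [reflM, (Finset.mem_erase.1 hs).1]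

lemma bform_single_reflM_mulVec (j : Fin l) (x : Fin l → ℝ) :
    bform l b (Pi.single j 1) (reflM l b j *ᵥ x) = -bform l b (Pi.single j 1) x := by
  rw [reflM_mulVec, bform_sub_right, bform_smul_right, bform_single_single]
  ring

lemma reflM_mul_self (j : Fin l) : reflM l b j * reflM l b j = 1 := by
  refine ext_iff_mulVec.2 fun x => ?_
  rw [← mulVec_mulVec, one_mulVec, reflM_mulVec _ (reflM l b j *ᵥ x),
    bform_single_reflM_mulVec, reflM_mulVec]
  module

lemma bform_reflM_mulVec (hsym : ∀ i j, i ≠ j → b i j = b j i) (j : Fin l) (x y : Fin l → ℝ) :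
    bform l b (reflM l b j *ᵥ x) (reflM l b j *ᵥ y) = bform l b x y := by
  rw [reflM_mulVec, reflM_mulVec]
  simp only [bform_sub_left, bform_sub_right, bform_smul_left, bform_smul_right,
    bform_single_single, bform_comm hsym x (Pi.single j 1)]
  ring

lemma exists_list_of_mem_WJ {J : Set (Fin l)} {w : Matrix (Fin l) (Fin l) ℝ}
    (hw : w ∈ WJ l b J) : ∃ s : List (Fin l), (s.map (reflM l b)).prod = w := by
  induction hw using Submonoid.closure_induction with
  | mem x hx => obtain ⟨j, -, rfl⟩ := hx; exact ⟨[j], by simp⟩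
  | one => exact ⟨[], rfl⟩
  | mul x y _ _ hx hy =>
    obtain ⟨s, rfl⟩ := hx
    obtain ⟨t, rfl⟩ := hy
    exact ⟨s ++ t, by simp⟩

lemma bform_mulVec_of_mem_WJ (hsym : ∀ i j, i ≠ j → b i j = b j i) {J : Set (Fin l)}
    {w : Matrix (Fin l) (Fin l) ℝ} (hw : w ∈ WJ l b J) (x y : Fin l → ℝ) :
    bform l b (w *ᵥ x) (w *ᵥ y) = bform l b x y := by
  induction hw using Submonoid.closure_induction generalizing x y with
  | mem u hu => obtain ⟨j, -, rfl⟩ := hu; exact bform_reflM_mulVec hsym j x y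
  | one => simp
  | mul u v _ _ hu hv => rw [← mulVec_mulVec, ← mulVec_mulVec, hu, hv]

lemma inv_mem_WJ {J : Set (Fin l)} {w : Matrix (Fin l) (Fin l) ℝ} (hw : w ∈ WJ l b J) :
    w⁻¹ ∈ WJ l b J := by
  induction hw using Submonoid.closure_induction with
  | mem u hu =>
    obtain ⟨j, hj, rfl⟩ := hu
    rw [inv_eq_left_inv (reflM_mul_self j)]
    exact Submonoid.subset_closure ⟨j, hj, rfl⟩
  | one => simp
  | mul u v _ _ hu hv => rw [Matrix.mul_inv_rev]; exact mul_mem hv hu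

lemma isUnit_det_of_mem_WJ {J : Set (Fin l)} {w : Matrix (Fin l) (Fin l) ℝ}
    (hw : w ∈ WJ l b J) : IsUnit w.det := by
  induction hw using Submonoid.closure_induction with
  | mem u hu => obtain ⟨j, -, rfl⟩ := hu; exact isUnit_det_of_left_inverse (reflM_mul_self j)
  | one => simp
  | mul u v _ _ hu hv => rw [det_mul]; exact hu.mul hv

lemma reflM_mulVec_single_self (i : Fin l) :
    reflM l b i *ᵥ Pi.single i 1 = -Pi.single i 1 := by
  rw [reflM_mulVec, bform_single_single]
  module

lemma reflM_mulVec_nonneg_of_le (hge : ∀ i j, i ≠ j → 2 ≤ b i j) {j p : Fin l} (hjp : j ≠ p)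
    {x : Fin l → ℝ} (hx : 0 ≤ x) (hmax : ∀ k, x k ≤ x p) :
    0 ≤ reflM l b j *ᵥ x ∧ ∀ k, (reflM l b j *ᵥ x) k ≤ (reflM l b j *ᵥ x) j := by
  have hkey : x p ≤ (reflM l b j *ᵥ x) j := by
    rw [reflM_mulVec_apply_self]
    have hp : x p ≤ ∑ s ∈ univ.erase j, x s :=
      single_le_sum (fun s _ => hx s) (mem_erase.2 ⟨hjp.symm, mem_univ p⟩)
    have hb : 2 * ∑ s ∈ univ.erase j, x s ≤ ∑ s ∈ univ.erase j, b j s * x s := by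
      rw [mul_sum]
      exact sum_le_sum fun s hs =>
        mul_le_mul_of_nonneg_right (hge j s (ne_of_mem_erase hs).symm) (hx s)
    linarith [hmax j]
  refine ⟨fun k => ?_, fun k => ?_⟩ <;> rcases eq_or_ne k j with rfl | hk
  · exact (hx p).trans hkey
  · rw [reflM_mulVec_apply_of_ne hk]; exact hx k
  · rfl
  · rw [reflM_mulVec_apply_of_ne hk]; exact (hmax k).trans hkey

lemma prod_mulVec_single_nonneg (hge : ∀ i j, i ≠ j → 2 ≤ b i j) (i : Fin l) :
    ∀ t : List (Fin l), (t ++ [i]).IsChain (· ≠ ·) →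
      0 ≤ (t.map (reflM l b)).prod *ᵥ Pi.single i 1 ∧
      ∀ k, ((t.map (reflM l b)).prod *ᵥ Pi.single i 1) k
        ≤ ((t.map (reflM l b)).prod *ᵥ Pi.single i 1) (t.headD i)
  | [], _ => by
    simp only [List.map_nil, List.prod_nil, one_mulVec, List.headD_nil, Pi.single_eq_same]
    refine ⟨Pi.single_nonneg.2 zero_le_one, fun k => ?_⟩
    rw [Pi.single_apply]; split <;> norm_num
  | j :: t, hchain => by
    rw [List.cons_append, List.isChain_cons] at hchain
    have hj : j ≠ t.headD i := hchain.1 _ (by cases t <;> simp)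
    obtain ⟨hnonneg, hmax⟩ := prod_mulVec_single_nonneg hge i t hchain.2
    simpa only [List.map_cons, List.prod_cons, ← mulVec_mulVec, List.headD_cons] using
      reflM_mulVec_nonneg_of_le hge hj hnonneg hmax

lemma mulVec_single_nonneg_or_nonpos (hge : ∀ i j, i ≠ j → 2 ≤ b i j) {J : Set (Fin l)}
    {w : Matrix (Fin l) (Fin l) ℝ} (hw : w ∈ WJ l b J) (i : Fin l) :
    0 ≤ w *ᵥ Pi.single i 1 ∨ w *ᵥ Pi.single i 1 ≤ 0 := by
  obtain ⟨s, rfl⟩ := exists_list_of_mem_WJ hw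
  obtain ⟨t, ht, hprod⟩ := exists_isChain_ne_prod_map_eq _ reflM_mul_self s
  rw [← hprod]
  by_cases hti : (t ++ [i]).IsChain (· ≠ ·)
  · exact .inl (prod_mulVec_single_nonneg hge i t hti).1
  · obtain ⟨t', rfl⟩ : ∃ t', t = t' ++ [i] := by
      simpa [List.isChain_append, ht, List.getLast?_eq_some_iff] using hti
    right
    rw [List.map_append, List.prod_append, ← mulVec_mulVec, List.map_singleton,
      List.prod_singleton, reflM_mulVec_single_self, mulVec_neg, neg_nonpos]
    exact (prod_mulVec_single_nonneg hge i t' ht).1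

lemma pos_of_mem_interior_chamberD {y : Fin l → ℝ} (hy : y ∈ interior (chamberD l b))
    (k : Fin l) : 0 < bform l b y (Pi.single k 1) := by
  let f : (Fin l → ℝ) →ₗ[ℝ] ℝ :=
    { toFun z := bform l b z (Pi.single k 1)
      map_add' _ _ := add_dotProduct ..
      map_smul' _ _ := smul_dotProduct .. }
  have hf : ∀ z, f z = bform l b z (Pi.single k 1) := fun _ => rfl
  have hsurj : Function.Surjective f := fun t =>
    ⟨t • Pi.single k 1, by rw [hf, bform_smul_left, bform_single_single, mul_one]⟩
  have hy' : y ∈ interior (f ⁻¹' Set.Ici 0) :=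
    interior_mono (fun _ (hz : _ ∈ chamberD l b) => hz k) hy
  rw [← (f.isOpenMap_of_finiteDimensional hsurj).preimage_interior_eq_interior_preimage
    f.continuous_of_finiteDimensional, interior_Ici] at hy'
  simpa [hf] using hy'

lemma bform_nonneg_of_nonneg (hsym : ∀ i j, i ≠ j → b i j = b j i) {x y : Fin l → ℝ}
    (hx : 0 ≤ x) (hy : y ∈ chamberD l b) : 0 ≤ bform l b x y := by
  rw [bform_eq_sum hsym]
  exact sum_nonneg fun k _ => mul_nonneg (hx k) (hy k)

lemma bform_neg_of_nonpos (hsym : ∀ i j, i ≠ j → b i j = b j i) {x y : Fin l → ℝ}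
    (hx : x ≤ 0) (hx0 : x ≠ 0) (hy : y ∈ interior (chamberD l b)) : bform l b x y < 0 := by
  obtain ⟨k, hk⟩ := Function.ne_iff.1 hx0
  have hpos := pos_of_mem_interior_chamberD hy
  rw [bform_eq_sum hsym]
  exact sum_neg' (fun k _ => mul_nonpos_of_nonpos_of_nonneg (hx k) (hpos k).le)
    ⟨k, mem_univ k, mul_neg_of_neg_of_pos ((hx k).lt_of_ne hk) (hpos k)⟩

lemma bform_mulVec_single_neg_of_neg (hsym : ∀ i j, i ≠ j → b i j = b j i)
    (hge : ∀ i j, i ≠ j → 2 ≤ b i j) {J : Set (Fin l)} {v : Matrix (Fin l) (Fin l) ℝ}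
    (hv : v ∈ WJ l b J) {i : Fin l} {y₀ y : Fin l → ℝ} (hy₀ : y₀ ∈ chamberD l b)
    (hneg : bform l b (v *ᵥ Pi.single i 1) y₀ < 0) (hy : y ∈ interior (chamberD l b)) :
    bform l b (v *ᵥ Pi.single i 1) y < 0 := by
  rcases mulVec_single_nonneg_or_nonpos hge hv i with hpos | hnonpos
  · exact absurd (bform_nonneg_of_nonneg hsym hpos hy₀) hneg.not_ge
  · refine bform_neg_of_nonpos hsym hnonpos (fun h => ?_) hy
    simp [h, bform] at hneg

end

theorem chamber_interior_subset_compl_general (l : ℕ) (b : Fin l → Fin l → ℝ)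
    (hsym : ∀ i j, i ≠ j → b i j = b j i) (hge : ∀ i j, i ≠ j → 2 ≤ b i j)
    (J : Set (Fin l)) (w : Matrix (Fin l) (Fin l) ℝ) (hw : w ∈ WJ l b Set.univ) :
    let P : Set (Fin l → ℝ) := {x | ∀ u ∈ WJ l b J, ∀ i : Fin l, i ∉ J →
      0 ≤ bform l b (u.mulVec (Pi.single i 1)) x}
    (interior (w.mulVec '' chamberD l b) ∩ Pᶜ).Nonempty →
      interior (w.mulVec '' chamberD l b) ⊆ Pᶜ := by
  intro P ⟨x₀, hx₀, hx₀P⟩ x hx hxP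
  simp only [P, Set.mem_compl_iff, Set.mem_ofPred_eq, not_forall, not_le] at hx₀P
  obtain ⟨u, hu, i, hi, hneg⟩ := hx₀P
  have hdet := isUnit_det_of_mem_WJ hw
  have hinterior := interior_image_subset_image_interior (f := w.mulVec)
    (mulVecLin w).continuous_of_finiteDimensional
    (mulVec_injective_iff_isUnit.2 ((isUnit_iff_isUnit_det w).2 hdet)) (chamberD l b)
  obtain ⟨y₀, hy₀, rfl⟩ := hinterior hx₀
  obtain ⟨y, hy, rfl⟩ := hinterior hx
  have htransfer : ∀ z, bform l b (u *ᵥ Pi.single i 1) (w *ᵥ z)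
      = bform l b ((w⁻¹ * u) *ᵥ Pi.single i 1) z := fun z => by
    rw [← bform_mulVec_of_mem_WJ hsym hw ((w⁻¹ * u) *ᵥ _), mulVec_mulVec, ← mul_assoc,
      mul_nonsing_inv _ hdet, one_mul]
  have hv : w⁻¹ * u ∈ WJ l b Set.univ :=
    mul_mem (inv_mem_WJ hw) (Submonoid.closure_mono (Set.image_mono J.subset_univ) hu)
  have hnonneg := hxP u hu i hi
  rw [htransfer] at hneg hnonneg
  exact hnonneg.not_gt (bform_mulVec_single_neg_of_neg hsym hge hv (interior_subset hy₀) hneg hy)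

/-- **Chambers do not cross the walls of `P`.**
Let `P = {x : ⟨w(e i), x⟩_B ≥ 0 for all w ∈ W_J, i ∉ J}`. For every `w` in the full
group `W`, if the interior of the chamber `D_w = w(D)` meets the complement of `P`,
then the interior of `D_w` is contained in the complement of `P`. -/
theorem chamber_interior_subset_compl (l : ℕ) (hl : 2 ≤ l) (b : Fin l → Fin l → ℝ)
    (hsym : ∀ i j, i ≠ j → b i j = b j i) (hge : ∀ i j, i ≠ j → 2 ≤ b i j)
    (J : Set (Fin l)) (w : Matrix (Fin l) (Fin l) ℝ) (hw : w ∈ WJ l b Set.univ) :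
    let P : Set (Fin l → ℝ) := {x | ∀ u ∈ WJ l b J, ∀ i : Fin l, i ∉ J →
      0 ≤ bform l b (u.mulVec (Pi.single i 1)) x}
    (interior (w.mulVec '' chamberD l b) ∩ Pᶜ).Nonempty →
      interior (w.mulVec '' chamberD l b) ⊆ Pᶜ :=
  chamber_interior_subset_compl_general l b hsym hge J w hw
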